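/- For the single-cluster power allocation problem: maximize log₂(1 + p_h·g_h/σ²) subject to p_h ≥ r_h·σ²/g_h, p_l ≥ r_l·(p_h + σ²/g_h), p_l ≥ r_l·(p_h + c/g_l), and p_h + p_l ≤ P, with all constants positive, the optimal p_h equals (P − r_l·max(σ²/g_h, c/g_l))/(1 + r_l), provided this value is at least r_h·σ²/g_h (feasibility). -/
import Mathlib


theorem stmt_15 (gh gl σ2 c P rh rl : ℝ) (hgh : 0 < gh) (hgl : 0 < gl)
    (hσ : 0 < σ2) (hc : 0 < c) (hP : 0 < P) (hrh : 0 < rh) (hrl : 0 < rl)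
    (phStar : ℝ)
    (hphStar : phStar = (P - rl * max (σ2 / gh) (c / gl)) / (1 + rl))
    (hfeas : phStar ≥ rh * σ2 / gh) :
    (phStar ≥ rh * σ2 / gh ∧
      (P - phStar) ≥ rl * (phStar + σ2 / gh) ∧
      (P - phStar) ≥ rl * (phStar + c / gl) ∧
      phStar + (P - phStar) ≤ P) ∧
    (∀ ph pl : ℝ,
      ph ≥ rh * σ2 / gh → pl ≥ rl * (ph + σ2 / gh) → pl ≥ rl * (ph + c / gl) →
      ph + pl ≤ P →
      Real.logb 2 (1 + ph * gh / σ2) ≤ Real.logb 2 (1 + phStar * gh / σ2)) := by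
  set K := max (σ2 / gh) (c / gl) with hKdef
  have hK1 : σ2 / gh ≤ K := le_max_left _ _
  have hK2 : c / gl ≤ K := le_max_right _ _
  have h1rl : (0:ℝ) < 1 + rl := by linarith
  have hmul : phStar * (1 + rl) = P - rl * K := by
    rw [hphStar]; field_simp
  constructor
  · refine ⟨hfeas, ?_, ?_, by linarith⟩
    · nlinarith
    · nlinarith
  · intro ph pl h1 h2 h3 h4
    have hK : pl ≥ rl * (ph + K) := by
      rcases max_cases (σ2 / gh) (c / gl) with ⟨hm, _⟩ | ⟨hm, _⟩ <;>
        rw [hKdef, hm] <;> assumption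
    have hle : ph ≤ phStar := by nlinarith
    have hpos : 0 < 1 + ph * gh / σ2 := by
      have : 0 < ph := lt_of_lt_of_le (by positivity) h1
      positivity
    have hle2 : 1 + ph * gh / σ2 ≤ 1 + phStar * gh / σ2 := by
      have : ph * gh / σ2 ≤ phStar * gh / σ2 := by gcongr
      linarith
    gcongr
    exact one_lt_two
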